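/- arXiv:2509.13606 — 6 statements merged into one kernel-verified Lean document; each statement's English description precedes it below -/
import Mathlib

section
/- Let T : C(X) → ℝ be a functional (applied to functions of the data) that is monotone (f ≥ g pointwise implies T(f) ≥ T(g)) and homogeneous (T(λf) = λT(f) for λ ∈ ℝ). Let μ ∈ X, r > 0, γ ≥ 0, and suppose: (i) for all b ∈ X with d(b,μ) > r, T(d²(b,·) − d²(μ,·)) > γ; and (ii) for all b ∈ X with d(b,μ) ≤ r, T(d²(b,·) − d²(μ,·)) ≥ −γ. Then any minimizer μ̂ of the function b ↦ sup_{a∈X} T(d²(b,·) − d²(a,·)) satisfies d(μ̂, μ) ≤ r. -/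
/-!
By homogeneity with `λ = -1`, `T(d²(μ,·) − d²(a,·)) = −T(d²(a,·) − d²(μ,·)) ≤ γ` for every `a`,
so `ψ(μ) ≤ γ`. A point `b` with `d(b, μ) > r` has `ψ(b) ≥ T(d²(b,·) − d²(μ,·)) > γ`, so it cannot
minimize `ψ`.
-/

theorem neg_apply_of_homogeneous {α : Type*} {T : (α → ℝ) → ℝ}
    (hhom : ∀ (lam : ℝ) (f : α → ℝ), T (fun x => lam * f x) = lam * T f) (f : α → ℝ) :
    T (fun x => -f x) = -T f := by
  simpa using hhom (-1) f

section SupRisk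

variable {X : Type*} [MetricSpace X]

/-- The paper's `ψ`. -/
noncomputable def supRisk (T : (X → ℝ) → ℝ) (b : X) : ℝ :=
  ⨆ a : X, T (fun x => dist b x ^ 2 - dist a x ^ 2)

variable {T : (X → ℝ) → ℝ}

theorem apply_sqDist_sub_comm
    (hhom : ∀ (lam : ℝ) (f : X → ℝ), T (fun x => lam * f x) = lam * T f) (a b : X) :
    T (fun x => dist a x ^ 2 - dist b x ^ 2) = -T (fun x => dist b x ^ 2 - dist a x ^ 2) := by
  rw [← neg_apply_of_homogeneous hhom]
  simp only [neg_sub]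

theorem supRisk_le_of_forall_neg_le
    (hhom : ∀ (lam : ℝ) (f : X → ℝ), T (fun x => lam * f x) = lam * T f) {μ : X} {γ : ℝ}
    (h : ∀ a : X, -γ ≤ T (fun x => dist a x ^ 2 - dist μ x ^ 2)) :
    supRisk T μ ≤ γ := by
  have : Nonempty X := ⟨μ⟩
  refine ciSup_le fun a => ?_
  rw [apply_sqDist_sub_comm hhom]
  linarith [h a]

end SupRisk

theorem stmt_3_general {X : Type*} [MetricSpace X]
    (T : (X → ℝ) → ℝ)
    (hhom : ∀ (lam : ℝ) (f : X → ℝ), T (fun x => lam * f x) = lam * T f)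
    (μ : X) (r : ℝ) (γ : ℝ) (hγ : 0 ≤ γ)
    (h1 : ∀ b : X, dist b μ > r → T (fun x => dist b x ^ 2 - dist μ x ^ 2) > γ)
    (h2 : ∀ b : X, dist b μ ≤ r → T (fun x => dist b x ^ 2 - dist μ x ^ 2) ≥ -γ)
    (hbdd : ∀ b : X, BddAbove (Set.range fun a : X => T (fun x => dist b x ^ 2 - dist a x ^ 2)))
    (μhat : X)
    (hmin : ∀ b : X,
      (⨆ a : X, T (fun x => dist μhat x ^ 2 - dist a x ^ 2)) ≤
        ⨆ a : X, T (fun x => dist b x ^ 2 - dist a x ^ 2)) :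
    dist μhat μ ≤ r := by
  by_contra! hfar
  have hlower : ∀ a : X, -γ ≤ T (fun x => dist a x ^ 2 - dist μ x ^ 2) := fun a =>
    (le_or_gt (dist a μ) r).elim (h2 a) fun ha => by linarith [h1 a ha]
  have : γ < γ :=
    calc γ < T (fun x => dist μhat x ^ 2 - dist μ x ^ 2) := h1 μhat hfar
      _ ≤ supRisk T μhat := le_ciSup (hbdd μhat) μ
      _ ≤ supRisk T μ := hmin μ
      _ ≤ γ := supRisk_le_of_forall_neg_le hhom hlower
  exact lt_irrefl γ this

/-- Localization lemma: a monotone homogeneous functional `T` on functions of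
the data localizes any minimizer of `b ↦ sup_a T(d²(b,·) − d²(a,·))` within
distance `r` of `μ`. -/
theorem stmt_3 {X : Type*} [MetricSpace X]
    (T : (X → ℝ) → ℝ)
    (hmono : ∀ f g : X → ℝ, (∀ x, f x ≥ g x) → T f ≥ T g)
    (hhom : ∀ (lam : ℝ) (f : X → ℝ), T (fun x => lam * f x) = lam * T f)
    (μ : X) (r : ℝ) (hr : 0 < r) (γ : ℝ) (hγ : 0 ≤ γ)
    (h1 : ∀ b : X, dist b μ > r → T (fun x => dist b x ^ 2 - dist μ x ^ 2) > γ)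
    (h2 : ∀ b : X, dist b μ ≤ r → T (fun x => dist b x ^ 2 - dist μ x ^ 2) ≥ -γ)
    (hbdd : ∀ b : X, BddAbove (Set.range fun a : X => T (fun x => dist b x ^ 2 - dist a x ^ 2)))
    (μhat : X)
    (hmin : ∀ b : X,
      (⨆ a : X, T (fun x => dist μhat x ^ 2 - dist a x ^ 2)) ≤
        ⨆ a : X, T (fun x => dist b x ^ 2 - dist a x ^ 2)) :
    dist μhat μ ≤ r :=
  stmt_3_general T hhom μ r γ hγ h1 h2 hbdd μhat hmin
end

section
/- Let S_n = Σ_{i=1}^n Z_i where Z₁,…,Zₙ are independent mean-zero random vectors in the dual X* of a Banach space whose dual squared norm satisfies the smoothness inequality ‖y*‖*² ≤ ‖x*‖*² + ⟨y*−x*, x⟩ + (2/C)‖y*−x*‖*² for all x ∈ ∂(‖·‖*²)(x*). Then E‖S_n‖*² ≤ (2/C) Σ_{i=1}^n E‖Z_i‖*². -/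
/-!
Write `S` for a partial sum and `Z` for the next, independent summand. Smoothness at `S`, with the
subgradient `x = g S`, gives `‖S + Z‖² ≤ ‖S‖² + Z x + (2/C)‖Z‖²`, while the subgradient inequality
gives `‖S‖² + Z x ≤ ‖S + Z‖²`; so the cross term `Z x` is integrable. Integrating it first in `Z`
(the law of `(S, Z)` is a product measure) kills it, because `Z` is weakly mean zero. Induction on
the number of summands finishes the proof.

The dual `X*` need not be separable, so addition on it need not be measurable; the independence of
a partial sum from the next summand is obtained instead from strongly measurable versions of the
summands, whose sums are measurable with respect to the joint σ-algebra.
-/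

open MeasureTheory ProbabilityTheory

/-- `x ∈ X` is a subgradient of a function `F` on the dual `X*` at `xs`. -/
def IsDualSubgradientAt {X : Type*} [NormedAddCommGroup X] [NormedSpace ℝ X]
    (F : (X →L[ℝ] ℝ) → ℝ) (xs : X →L[ℝ] ℝ) (x : X) : Prop :=
  ∀ ys : X →L[ℝ] ℝ, F ys ≥ F xs + (ys - xs) x

section IndependentSums

variable {Ω ι E : Type*} {mΩ : MeasurableSpace Ω} {μ : Measure Ω}
  [NormedAddCommGroup E] [MeasurableSpace E]
  {f : ι → Ω → E} {s : Finset ι} {i : ι}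

lemma MeasureTheory.StronglyMeasurable.comap_self [BorelSpace E] {g : Ω → E}
    (hg : StronglyMeasurable g) :
    StronglyMeasurable[MeasurableSpace.comap g ‹_›] g :=
  stronglyMeasurable_iff_measurable_separable.2 ⟨comap_measurable g, hg.isSeparable_range⟩

lemma ProbabilityTheory.iIndepFun.indepFun_finsetSum_of_notMem_of_stronglyMeasurable
    [BorelSpace E] (hf : iIndepFun f μ) (hfm : ∀ j, StronglyMeasurable (f j)) (hi : i ∉ s) :
    IndepFun (∑ j ∈ s, f j) (f i) μ := by
  have hind := indep_iSup_of_disjoint (fun j => (hfm j).measurable.comap_le)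
    ((iIndepFun_iff_iIndep _ _ _).1 hf) (S := s) (T := {i}) (by simpa using hi)
  rw [IndepFun_iff_Indep]
  refine indep_of_indep_of_le_right (indep_of_indep_of_le_left hind ?_) ?_
  · have : StronglyMeasurable[⨆ j ∈ (s : Set ι), MeasurableSpace.comap (f j) ‹_›]
        (∑ j ∈ s, f j) :=
      Finset.stronglyMeasurable_sum s fun j hj =>
        (hfm j).comap_self.mono (le_biSup (fun j => MeasurableSpace.comap (f j) ‹_›) hj)
    exact this.measurable.comap_le
  · exact le_biSup (fun j => MeasurableSpace.comap (f j) ‹_›) (Set.mem_singleton i)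

lemma ProbabilityTheory.iIndepFun.indepFun_finsetSum_of_notMem_of_aestronglyMeasurable
    [BorelSpace E] (hf : iIndepFun f μ) (hfm : ∀ j, AEStronglyMeasurable (f j) μ) (hi : i ∉ s) :
    IndepFun (∑ j ∈ s, f j) (f i) μ := by
  have hmk : ∀ j, f j =ᵐ[μ] (hfm j).mk := fun j => (hfm j).ae_eq_mk
  refine ((hf.congr hmk).indepFun_finsetSum_of_notMem_of_stronglyMeasurable
    (fun j => (hfm j).stronglyMeasurable_mk) hi).congr ?_ (hmk i).symm
  filter_upwards [(Filter.eventually_all_finset s).2 fun j _ => hmk j] with ω hω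
  simp only [Finset.sum_apply]
  exact (Finset.sum_congr rfl hω).symm

end IndependentSums

theorem ProbabilityTheory.IndepFun.integral_comp_pair_eq_integral_integral
    {Ω α β E : Type*} {mΩ : MeasurableSpace Ω} {μ : Measure Ω} [IsFiniteMeasure μ]
    [MeasurableSpace α] [MeasurableSpace β] [NormedAddCommGroup E] [NormedSpace ℝ E]
    {S : Ω → α} {W : Ω → β} (hSW : IndepFun S W μ) (hS : AEMeasurable S μ)
    (hW : AEMeasurable W μ) {F : α × β → E} (hF : StronglyMeasurable F)
    (hint : Integrable (fun ω => F (S ω, W ω)) μ) :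
    ∫ ω, F (S ω, W ω) ∂μ = ∫ a, ∫ ω, F (a, W ω) ∂μ ∂(μ.map S) := by
  have hmap := hSW.map_prod_eq_prod_map_map hS hW
  have hSW' : AEMeasurable (fun ω => (S ω, W ω)) μ := hS.prodMk hW
  rw [← integral_map hSW' hF.aestronglyMeasurable, hmap, integral_prod]
  · refine integral_congr_ae (Filter.Eventually.of_forall fun a => ?_)
    exact integral_map hW (hF.comp_measurable measurable_prodMk_left).aestronglyMeasurable
  · rw [← hmap]
    exact (integrable_map_measure hF.aestronglyMeasurable hSW').2 hint

section SmoothDualNorm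

variable {X Ω : Type*} [NormedAddCommGroup X] [NormedSpace ℝ X] [SecondCountableTopology X]
  [MeasurableSpace X] [OpensMeasurableSpace X]
  [MeasurableSpace (X →L[ℝ] ℝ)] [BorelSpace (X →L[ℝ] ℝ)]
  {mΩ : MeasurableSpace Ω} {P : Measure Ω} [IsFiniteMeasure P] {K : ℝ}
  {g : (X →L[ℝ] ℝ) → X}

theorem integral_norm_add_sq_le_of_indepFun
    (hgmeas : Measurable g)
    (hg : ∀ xs : X →L[ℝ] ℝ, IsDualSubgradientAt (fun zs => ‖zs‖ ^ 2) xs (g xs))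
    (hsmooth : ∀ xs ys : X →L[ℝ] ℝ, ‖ys‖ ^ 2 ≤ ‖xs‖ ^ 2 + (ys - xs) (g xs) + K * ‖ys - xs‖ ^ 2)
    {S W : Ω → X →L[ℝ] ℝ} (hS : MemLp S 2 P) (hW : MemLp W 2 P) (hSW : IndepFun S W P)
    (hmean : ∀ y : X, ∫ ω, W ω y ∂P = 0) :
    ∫ ω, ‖(S + W) ω‖ ^ 2 ∂P ≤ ∫ ω, ‖S ω‖ ^ 2 ∂P + K * ∫ ω, ‖W ω‖ ^ 2 ∂P := by
  set F : (X →L[ℝ] ℝ) × (X →L[ℝ] ℝ) → ℝ := fun p => p.2 (g p.1) with hFdef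
  have hF : StronglyMeasurable F :=
    (isBoundedBilinearMap_apply.continuous.measurable.comp
      (measurable_snd.prodMk (hgmeas.comp measurable_fst))).stronglyMeasurable
  have hlower : ∀ ω, ‖(S + W) ω‖ ^ 2 ≤ ‖S ω‖ ^ 2 + F (S ω, W ω) + K * ‖W ω‖ ^ 2 := fun ω => by
    simpa using hsmooth (S ω) ((S + W) ω)
  have hupper : ∀ ω, ‖S ω‖ ^ 2 + F (S ω, W ω) ≤ ‖(S + W) ω‖ ^ 2 := fun ω => by
    simpa using hg (S ω) ((S + W) ω)
  have hSsq : Integrable (fun ω => ‖S ω‖ ^ 2) P := hS.integrable_norm_pow'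
  have hWsq : Integrable (fun ω => ‖W ω‖ ^ 2) P := hW.integrable_norm_pow'
  have hSWL2 : MemLp (S + W) 2 P := MemLp.add (ε := X →L[ℝ] ℝ) hS hW
  have hSWsq : Integrable (fun ω => ‖(S + W) ω‖ ^ 2) P := hSWL2.integrable_norm_pow'
  have hcross : Integrable (fun ω => F (S ω, W ω)) P := by
    refine integrable_of_le_of_le (hF.aestronglyMeasurable.comp_aemeasurable
      (hS.aemeasurable.prodMk hW.aemeasurable))
      (Filter.Eventually.of_forall fun ω => ?_) (Filter.Eventually.of_forall fun ω => ?_)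
      ((hSWsq.sub hSsq).sub (hWsq.const_mul K)) (hSWsq.sub hSsq)
    · simp only [Pi.sub_apply]
      linarith [hlower ω]
    · simp only [Pi.sub_apply]
      linarith [hupper ω]
  have hcross_zero : ∫ ω, F (S ω, W ω) ∂P = 0 := by
    rw [hSW.integral_comp_pair_eq_integral_integral hS.aemeasurable hW.aemeasurable hF hcross]
    simp [hFdef, hmean]
  calc ∫ ω, ‖(S + W) ω‖ ^ 2 ∂P
      ≤ ∫ ω, (‖S ω‖ ^ 2 + F (S ω, W ω) + K * ‖W ω‖ ^ 2) ∂P :=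
        integral_mono hSWsq ((hSsq.fun_add hcross).fun_add (hWsq.const_mul K)) hlower
    _ = ∫ ω, ‖S ω‖ ^ 2 ∂P + K * ∫ ω, ‖W ω‖ ^ 2 ∂P := by
        rw [integral_add (hSsq.fun_add hcross) (hWsq.const_mul K), integral_add hSsq hcross,
          hcross_zero, add_zero, integral_const_mul]

end SmoothDualNorm

theorem stmt_10_general {X : Type*} [NormedAddCommGroup X] [NormedSpace ℝ X]
    [SecondCountableTopology X]
    [MeasurableSpace X] [BorelSpace X]
    [MeasurableSpace (X →L[ℝ] ℝ)] [BorelSpace (X →L[ℝ] ℝ)]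
    {Ω : Type*} [MeasurableSpace Ω] (P : Measure Ω) [IsProbabilityMeasure P]
    (C : ℝ)
    (hsmooth : ∀ (xs ys : X →L[ℝ] ℝ) (x : X),
      IsDualSubgradientAt (fun zs => ‖zs‖ ^ 2) xs x →
        ‖ys‖ ^ 2 ≤ ‖xs‖ ^ 2 + (ys - xs) x + 2 / C * ‖ys - xs‖ ^ 2)
    (g : (X →L[ℝ] ℝ) → X) (hgmeas : Measurable g)
    (hg : ∀ xs : X →L[ℝ] ℝ, IsDualSubgradientAt (fun zs => ‖zs‖ ^ 2) xs (g xs))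
    (n : ℕ) (Z : Fin n → Ω → (X →L[ℝ] ℝ))
    (hL2 : ∀ i, MemLp (Z i) 2 P)
    (hmean : ∀ (i : Fin n) (y : X), ∫ ω, Z i ω y ∂P = 0)
    (hindep : iIndepFun Z P) :
    (∫ ω, ‖∑ i, Z i ω‖ ^ 2 ∂P) ≤ 2 / C * ∑ i, ∫ ω, ‖Z i ω‖ ^ 2 ∂P := by
  have partial_sums : ∀ s : Finset (Fin n),
      ∫ ω, ‖(∑ i ∈ s, Z i) ω‖ ^ 2 ∂P ≤ 2 / C * ∑ i ∈ s, ∫ ω, ‖Z i ω‖ ^ 2 ∂P := by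
    intro s
    induction s using Finset.induction_on with
    | empty => simp
    | insert j s hj ih =>
      have hstep := integral_norm_add_sq_le_of_indepFun hgmeas hg
        (fun xs ys => hsmooth xs ys _ (hg xs))
        (memLp_finsetSum' (ε' := X →L[ℝ] ℝ) s fun i _ => hL2 i) (hL2 j)
        (hindep.indepFun_finsetSum_of_notMem_of_aestronglyMeasurable (fun i => (hL2 i).1) hj)
        (hmean j)
      rw [Finset.sum_insert hj, Finset.sum_insert hj, add_comm (Z j)]
      linarith
  simpa [Finset.sum_apply] using partial_sums Finset.univ

/-- If the squared dual norm is smooth with constant `2/C` and `Z₁,…,Zₙ` are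
independent mean-zero square-integrable `X*`-valued random vectors, then
`E‖Σᵢ Zᵢ‖*² ≤ (2/C) Σᵢ E‖Zᵢ‖*²`. -/
theorem stmt_10 {X : Type*} [NormedAddCommGroup X] [NormedSpace ℝ X]
    [SecondCountableTopology X]
    [MeasurableSpace X] [BorelSpace X]
    [MeasurableSpace (X →L[ℝ] ℝ)] [BorelSpace (X →L[ℝ] ℝ)]
    {Ω : Type*} [MeasurableSpace Ω] (P : Measure Ω) [IsProbabilityMeasure P]
    (C : ℝ) (hC : 0 < C)
    (hsmooth : ∀ (xs ys : X →L[ℝ] ℝ) (x : X),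
      IsDualSubgradientAt (fun zs => ‖zs‖ ^ 2) xs x →
        ‖ys‖ ^ 2 ≤ ‖xs‖ ^ 2 + (ys - xs) x + 2 / C * ‖ys - xs‖ ^ 2)
    (g : (X →L[ℝ] ℝ) → X) (hgmeas : Measurable g)
    (hg : ∀ xs : X →L[ℝ] ℝ, IsDualSubgradientAt (fun zs => ‖zs‖ ^ 2) xs (g xs))
    (n : ℕ) (Z : Fin n → Ω → (X →L[ℝ] ℝ))
    (hmeas : ∀ i, Measurable (Z i))
    (hL2 : ∀ i, MemLp (Z i) 2 P)
    (hmean : ∀ (i : Fin n) (y : X), ∫ ω, Z i ω y ∂P = 0)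
    (hindep : iIndepFun Z P) :
    (∫ ω, ‖∑ i, Z i ω‖ ^ 2 ∂P) ≤ 2 / C * ∑ i, ∫ ω, ‖Z i ω‖ ^ 2 ∂P :=
  stmt_10_general P C hsmooth g hgmeas hg n Z hL2 hmean hindep
end

section
/- Smoothness of the squared ℓ^q norm for q ≥ 2: for all x, y ∈ ℝᵐ, ‖y‖_q² ≤ ‖x‖_q² + ⟨∇(‖·‖_q²)(x), y − x⟩ + (q−1)‖y − x‖_q², where ∇(‖·‖_q²)(x) = 2‖x‖_q^{2−q}(|x(ℓ)|^{q−1} sign(x(ℓ)))_ℓ for x ≠ 0 (and equals 0 for x = 0). -/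
open Finset

/-- The `ℓ^q` norm on `ℝᵐ`. -/
noncomputable def lqNorm (q : ℝ) {m : ℕ} (x : Fin m → ℝ) : ℝ :=
  (∑ l, |x l| ^ q) ^ (1 / q)

/-- The gradient of the squared `ℓ^q` norm (taken to be `0` at `x = 0`). -/
noncomputable def lqGrad (q : ℝ) {m : ℕ} (x : Fin m → ℝ) : Fin m → ℝ :=
  if x = 0 then 0
  else fun l => 2 * lqNorm q x ^ (2 - q) * |x l| ^ (q - 1) * Real.sign (x l)

/-!
Along a line `t ↦ x + t • h` the squared norm is `g t = S t ^ (2 / q)` with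
`S t = ∑ l, |x l + t * h l| ^ q`. If the line avoids `0`, `g` is twice differentiable and
`g'' = (2/q) (2/q - 1) S^(2/q - 2) S'² + 2 (q - 1) S^(2/q - 1) ∑ l, |x l + t h l|^(q-2) h l²`.
The first term is `≤ 0` because `q ≥ 2`, and Hölder's inequality with exponents `q/(q-2)` and `q/2`
bounds the second by `2 (q - 1) ‖h‖_q²`; the second-order Taylor estimate between `t = 0` and
`t = 1` is the claim. If the line passes through `0`, then `x = c • h`, `g t = (c + t)² ‖h‖_q²`,
and the claim reduces to `1 ≤ q - 1`.
-/

open Real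

lemma le_add_deriv_mul_add_sq_of_deriv2_le {g g' g'' : ℝ → ℝ} {K a b : ℝ} (hab : a ≤ b)
    (hg : ∀ t, HasDerivAt g (g' t) t) (hg' : ∀ t, HasDerivAt g' (g'' t) t)
    (hK : ∀ t, g'' t ≤ K) :
    g b ≤ g a + g' a * (b - a) + K / 2 * (b - a) ^ 2 := by
  rcases hab.eq_or_lt with rfl | hab
  · simp
  have hsq : ∀ t, HasDerivAt (fun s : ℝ => K / 2 * s ^ 2) (K * t) t := fun t =>
    ((hasDerivAt_pow 2 t).const_mul (K / 2)).congr_deriv (by norm_num; ring)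
  have hψ : ∀ t, HasDerivAt (fun s => K / 2 * s ^ 2 - g s) (K * t - g' t) t :=
    fun t => (hsq t).sub (hg t)
  have hψ' : ∀ t, HasDerivAt (fun s => K * s - g' s) (K - g'' t) t := fun t =>
    (((hasDerivAt_id' t).const_mul K).sub (hg' t)).congr_deriv (by ring)
  have hconv : ConvexOn ℝ Set.univ (fun s => K / 2 * s ^ 2 - g s) :=
    convexOn_of_hasDerivWithinAt2_nonneg convex_univ
      (fun t _ => (hψ t).continuousAt.continuousWithinAt)
      (fun t _ => (hψ t).hasDerivWithinAt) (fun t _ => (hψ' t).hasDerivWithinAt)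
      (fun t _ => sub_nonneg.2 (hK t))
  have := hconv.le_slope_of_hasDerivAt (Set.mem_univ a) (Set.mem_univ b) hab (hψ a)
  rw [slope_def_field, le_div_iff₀ (sub_pos.2 hab)] at this
  nlinarith

lemma hasDerivAt_abs_rpow_mul_self {p : ℝ} (hp : 0 ≤ p) (t : ℝ) :
    HasDerivAt (fun s : ℝ => |s| ^ p * s) ((p + 1) * |t| ^ p) t := by
  rcases eq_or_ne t 0 with rfl | ht
  · have hcont : ContinuousAt (fun s : ℝ => |s| ^ p) 0 :=
      (continuousAt_rpow_const _ _ (Or.inr hp)).comp continuous_abs.continuousAt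
    have hval : (p + 1) * |(0 : ℝ)| ^ p = |(0 : ℝ)| ^ p := by
      rcases hp.eq_or_lt with rfl | hp
      · simp
      · simp [zero_rpow hp.ne']
    rw [hasDerivAt_iff_tendsto_slope, hval]
    refine (hcont.tendsto.mono_left nhdsWithin_le_nhds).congr' ?_
    filter_upwards [self_mem_nhdsWithin] with s (hs : s ≠ 0)
    rw [slope_def_field]
    field_simp
    simp
  · have habs : HasDerivAt (fun s : ℝ => |s| ^ p) (SignType.sign t * p * |t| ^ (p - 1)) t := by
      simpa using (hasDerivAt_abs ht).rpow_const (p := p) (Or.inl (abs_ne_zero.2 ht))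
    refine (habs.mul (hasDerivAt_id' t)).congr_deriv ?_
    rw [rpow_sub_one (abs_ne_zero.2 ht)]
    calc _ = p * (|t| ^ p / |t|) * (SignType.sign t * t) + |t| ^ p := by ring
      _ = _ := by rw [sign_mul_self]; field_simp

lemma abs_rpow_add_one_mul_sign (p t : ℝ) : |t| ^ (p + 1) * Real.sign t = |t| ^ p * t := by
  rcases lt_trichotomy t 0 with ht | rfl | ht
  · rw [Real.sign_of_neg ht, abs_of_neg ht, rpow_add_one (neg_ne_zero.2 ht.ne)]; ring
  · simp
  · rw [Real.sign_of_pos ht, abs_of_pos ht, rpow_add_one ht.ne']; ring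

section Line

variable {ι : Type*} [Fintype ι] (x h : ι → ℝ)

lemma hasDerivAt_sum_abs_rpow_line {q : ℝ} (hq : 1 < q) (t : ℝ) :
    HasDerivAt (fun s => ∑ l, |x l + s * h l| ^ q)
      (q * ∑ l, |x l + t * h l| ^ (q - 2) * (x l + t * h l) * h l) t := by
  rw [Finset.mul_sum]
  refine HasDerivAt.fun_sum fun l _ => ?_
  have hline : HasDerivAt (fun s => x l + s * h l) (h l) t := by
    simpa using ((hasDerivAt_id' t).mul_const (h l)).const_add (x l)
  exact ((hasDerivAt_abs_rpow _ hq).comp t hline).congr_deriv (by ring)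

lemma hasDerivAt_sum_abs_rpow_mul_self_line {p : ℝ} (hp : 0 ≤ p) (t : ℝ) :
    HasDerivAt (fun s => ∑ l, |x l + s * h l| ^ p * (x l + s * h l) * h l)
      ((p + 1) * ∑ l, |x l + t * h l| ^ p * h l ^ 2) t := by
  rw [Finset.mul_sum]
  refine HasDerivAt.fun_sum fun l _ => ?_
  have hline : HasDerivAt (fun s => x l + s * h l) (h l) t := by
    simpa using ((hasDerivAt_id' t).mul_const (h l)).const_add (x l)
  exact (((hasDerivAt_abs_rpow_mul_self hp _).comp t hline).mul_const (h l)).congr_deriv (by ring)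

end Line

lemma sum_abs_rpow_mul_sq_le {ι : Type*} (s : Finset ι) {q : ℝ} (hq : 2 ≤ q) (u h : ι → ℝ) :
    ∑ l ∈ s, |u l| ^ (q - 2) * h l ^ 2 ≤
      (∑ l ∈ s, |u l| ^ q) ^ ((q - 2) / q) * (∑ l ∈ s, |h l| ^ q) ^ (2 / q) := by
  have hsq : ∀ l, h l ^ 2 = |h l| ^ (2 : ℝ) := fun l => by
    rw [← sq_abs, ← rpow_natCast]; norm_num
  rcases hq.eq_or_lt with rfl | hq
  · norm_num only [sub_self, rpow_zero, zero_div, one_mul, div_self, rpow_one]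
    exact (Finset.sum_congr rfl fun l _ => hsq l).le
  have hpq : (q / (q - 2)).HolderConjugate (q / 2) :=
    Real.holderConjugate_iff.2 ⟨by rw [one_lt_div] <;> linarith, by field_simp; ring⟩
  have H := inner_le_Lp_mul_Lq_of_nonneg s hpq (f := fun l => |u l| ^ (q - 2))
    (g := fun l => h l ^ 2) (fun _ _ => by positivity) (fun _ _ => by positivity)
  have hu : ∀ l, (|u l| ^ (q - 2)) ^ (q / (q - 2)) = |u l| ^ q := fun l => by
    rw [← rpow_mul (abs_nonneg _)]; congr 1; field_simp
  have hh : ∀ l, (h l ^ 2) ^ (q / 2) = |h l| ^ q := fun l => by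
    rw [hsq, ← rpow_mul (abs_nonneg _)]; congr 1; field_simp
  simpa only [hu, hh, one_div_div] using H

lemma sum_abs_rpow_pos {ι : Type*} [Fintype ι] {q : ℝ} {v : ι → ℝ} (hv : v ≠ 0) :
    0 < ∑ l, |v l| ^ q := by
  obtain ⟨l, hl⟩ := Function.ne_iff.1 hv
  exact Finset.sum_pos' (fun _ _ => by positivity)
    ⟨l, Finset.mem_univ l, rpow_pos_of_pos (abs_pos.2 hl) q⟩

/-- The second derivative of `t ↦ S t ^ (2 / q)` when `S' = q U` and `U' = (q - 1) W`. -/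
lemma deriv2_rpow_two_div_le {q S U W N : ℝ} (hq : 2 ≤ q) (hS : 0 < S)
    (hW : W ≤ S ^ ((q - 2) / q) * N) :
    2 * ((q * U) * (2 / q - 1) * S ^ (2 / q - 1 - 1)) * U + 2 * S ^ (2 / q - 1) * ((q - 1) * W)
      ≤ 2 * (q - 1) * N := by
  have hq0 : 0 < q := by linarith
  have hcancel : S ^ (2 / q - 1) * S ^ ((q - 2) / q) = 1 := by
    rw [← rpow_add hS, show 2 / q - 1 + (q - 2) / q = 0 by field_simp; ring, rpow_zero]
  have hconcave : 2 * ((q * U) * (2 / q - 1) * S ^ (2 / q - 1 - 1)) * U ≤ 0 := by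
    rw [show 2 * ((q * U) * (2 / q - 1) * S ^ (2 / q - 1 - 1)) * U
      = (2 / q - 1) * (2 * q * S ^ (2 / q - 1 - 1) * U ^ 2) by ring]
    exact mul_nonpos_of_nonpos_of_nonneg (sub_nonpos.2 ((div_le_one hq0).2 (by linarith)))
      (by have := rpow_pos_of_pos hS (2 / q - 1 - 1); positivity)
  calc _ ≤ 0 + 2 * S ^ (2 / q - 1) * ((q - 1) * (S ^ ((q - 2) / q) * N)) := by
        gcongr
        linarith
    _ = 2 * (q - 1) * N * (S ^ (2 / q - 1) * S ^ ((q - 2) / q)) := by ring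
    _ = _ := by rw [hcancel, mul_one]

section LqNorm

variable {q : ℝ} {m : ℕ}

lemma lqNorm_sq (hq : q ≠ 0) (v : Fin m → ℝ) : lqNorm q v ^ 2 = (∑ l, |v l| ^ q) ^ (2 / q) := by
  rw [lqNorm, ← rpow_natCast, ← rpow_mul (by positivity)]
  congr 1
  push_cast
  field_simp

lemma lqNorm_smul_sq (hq : 0 < q) (c : ℝ) (v : Fin m → ℝ) :
    lqNorm q (c • v) ^ 2 = c ^ 2 * lqNorm q v ^ 2 := by
  have hsum : ∑ l, |(c • v) l| ^ q = |c| ^ q * ∑ l, |v l| ^ q := by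
    simp only [Pi.smul_apply, smul_eq_mul, abs_mul, mul_rpow (abs_nonneg _) (abs_nonneg _),
      Finset.mul_sum]
  rw [lqNorm_sq hq.ne', lqNorm_sq hq.ne', hsum, mul_rpow (by positivity) (by positivity),
    ← rpow_mul (abs_nonneg _), mul_div_cancel₀ _ hq.ne', rpow_two, sq_abs]

lemma lqGrad_of_ne_zero (hq : 0 < q) {v : Fin m → ℝ} (hv : v ≠ 0) (l : Fin m) :
    lqGrad q v l = 2 * (∑ k, |v k| ^ q) ^ (2 / q - 1) * (|v l| ^ (q - 2) * v l) := by
  have hpow : lqNorm q v ^ (2 - q) = (∑ k, |v k| ^ q) ^ (2 / q - 1) := by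
    rw [lqNorm, ← rpow_mul (by positivity)]
    congr 1
    field_simp
  rw [lqGrad, if_neg hv, hpow, ← abs_rpow_add_one_mul_sign, show q - 2 + 1 = q - 1 by ring]
  ring

lemma hasDerivAt_lqNorm_sq_line (hq : 1 < q) (x h : Fin m → ℝ) {t : ℝ}
    (ht : x + t • h ≠ 0) :
    HasDerivAt (fun s => lqNorm q (x + s • h) ^ 2) (∑ l, lqGrad q (x + t • h) l * h l) t := by
  have hq0 : 0 < q := by linarith
  have hSpos : 0 < ∑ l, |x l + t * h l| ^ q := by simpa using sum_abs_rpow_pos (q := q) ht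
  have hfun : (fun s => lqNorm q (x + s • h) ^ 2) =
      fun s => (∑ l, |x l + s * h l| ^ q) ^ (2 / q) := by
    funext s; simp [lqNorm_sq hq0.ne']
  rw [hfun]
  refine ((hasDerivAt_sum_abs_rpow_line x h hq t).rpow_const (Or.inl hSpos.ne')).congr_deriv ?_
  simp only [lqGrad_of_ne_zero hq0 ht, Pi.add_apply, Pi.smul_apply, smul_eq_mul, mul_assoc,
    ← Finset.mul_sum]
  field_simp

lemma sum_lqGrad_smul_mul (hq : 1 < q) (c : ℝ) (h : Fin m → ℝ) :
    ∑ l, lqGrad q (c • h) l * h l = 2 * c * lqNorm q h ^ 2 := by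
  have hq0 : 0 < q := by linarith
  have hline : ∀ s : ℝ, lqNorm q (c • h + s • h) ^ 2 = (c + s) ^ 2 * lqNorm q h ^ 2 := fun s => by
    rw [← add_smul, lqNorm_smul_sq hq0]
  by_cases hch : c • h = 0
  · have hzero : c ^ 2 * lqNorm q h ^ 2 = 0 := by
      rw [← lqNorm_smul_sq hq0, hch]
      simp [lqNorm, zero_rpow hq0.ne', zero_rpow (inv_ne_zero hq0.ne')]
    simp only [lqGrad, hch, if_true, Pi.zero_apply, zero_mul, Finset.sum_const_zero]
    rcases mul_eq_zero.1 hzero with hc | hN <;> simp_all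
  -- both sides are the derivative at `0` of `s ↦ lqNorm q ((c + s) • h) ^ 2`
  have hderiv := hasDerivAt_lqNorm_sq_line hq (c • h) h (t := 0) (by simpa using hch)
  simp only [hline, zero_smul, add_zero] at hderiv
  refine hderiv.unique ?_
  exact (((hasDerivAt_id' (0 : ℝ)).const_add c).pow 2).mul_const _ |>.congr_deriv (by simp)

lemma lqNorm_sq_smul_add_le (hq : 2 ≤ q) (c : ℝ) (h : Fin m → ℝ) :
    lqNorm q (c • h + h) ^ 2 ≤
      lqNorm q (c • h) ^ 2 + ∑ l, lqGrad q (c • h) l * h l + (q - 1) * lqNorm q h ^ 2 := by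
  have hq0 : 0 < q := by linarith
  rw [sum_lqGrad_smul_mul (by linarith), show c • h + h = (c + 1) • h by module,
    lqNorm_smul_sq hq0, lqNorm_smul_sq hq0]
  nlinarith [sq_nonneg (lqNorm q h)]

lemma lqNorm_sq_add_le_of_forall_ne_zero (hq : 2 ≤ q) (x h : Fin m → ℝ)
    (hline : ∀ t : ℝ, x + t • h ≠ 0) :
    lqNorm q (x + h) ^ 2 ≤
      lqNorm q x ^ 2 + ∑ l, lqGrad q x l * h l + (q - 1) * lqNorm q h ^ 2 := by
  have hq0 : 0 < q := by linarith
  set S : ℝ → ℝ := fun t => ∑ l, |x l + t * h l| ^ q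
  set U : ℝ → ℝ := fun t => ∑ l, |x l + t * h l| ^ (q - 2) * (x l + t * h l) * h l
  set W : ℝ → ℝ := fun t => ∑ l, |x l + t * h l| ^ (q - 2) * h l ^ 2
  have hSpos : ∀ t, 0 < S t := fun t => by simpa using sum_abs_rpow_pos (q := q) (hline t)
  have hgrad : (fun t => ∑ l, lqGrad q (x + t • h) l * h l) =
      fun t => 2 * S t ^ (2 / q - 1) * U t := by
    funext t
    simp only [lqGrad_of_ne_zero hq0 (hline t), Pi.add_apply, Pi.smul_apply, smul_eq_mul,
      mul_assoc, ← Finset.mul_sum, S, U]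
  have hU : ∀ t, HasDerivAt U ((q - 1) * W t) t := fun t => by
    simpa [show q - 2 + 1 = q - 1 by ring] using
      hasDerivAt_sum_abs_rpow_mul_self_line x h (p := q - 2) (by linarith) t
  have hG : ∀ t, HasDerivAt (fun s => 2 * S s ^ (2 / q - 1) * U s)
      (2 * ((q * U t) * (2 / q - 1) * S t ^ (2 / q - 1 - 1)) * U t
        + 2 * S t ^ (2 / q - 1) * ((q - 1) * W t)) t := fun t =>
    (((hasDerivAt_sum_abs_rpow_line x h (by linarith) t).rpow_const
      (Or.inl (hSpos t).ne')).const_mul 2).mul (hU t)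
  have hK : ∀ t, 2 * ((q * U t) * (2 / q - 1) * S t ^ (2 / q - 1 - 1)) * U t
      + 2 * S t ^ (2 / q - 1) * ((q - 1) * W t) ≤ 2 * (q - 1) * lqNorm q h ^ 2 := fun t =>
    deriv2_rpow_two_div_le hq (hSpos t)
      (by rw [lqNorm_sq hq0.ne']; exact sum_abs_rpow_mul_sq_le _ hq _ h)
  have taylor := le_add_deriv_mul_add_sq_of_deriv2_le zero_le_one
    (fun t => hasDerivAt_lqNorm_sq_line (by linarith) x h (hline t)) (hgrad ▸ hG) hK
  norm_num at taylor
  linarith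

lemma lqNorm_sq_add_le (hq : 2 ≤ q) (x h : Fin m → ℝ) :
    lqNorm q (x + h) ^ 2 ≤
      lqNorm q x ^ 2 + ∑ l, lqGrad q x l * h l + (q - 1) * lqNorm q h ^ 2 := by
  by_cases hline : ∃ t : ℝ, x + t • h = 0
  · obtain ⟨t, ht⟩ := hline
    obtain rfl : x = (-t) • h := by rw [neg_smul]; exact eq_neg_of_add_eq_zero_left ht
    exact lqNorm_sq_smul_add_le hq (-t) h
  · exact lqNorm_sq_add_le_of_forall_ne_zero hq x h (not_exists.1 hline)

end LqNorm

/-- Smoothness of the squared `ℓ^q` norm for `q ≥ 2`: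
`‖y‖_q² ≤ ‖x‖_q² + ⟨∇(‖·‖_q²)(x), y − x⟩ + (q−1)‖y − x‖_q²`. -/
theorem stmt_12 (q : ℝ) (hq : 2 ≤ q) (m : ℕ) (x y : Fin m → ℝ) :
    lqNorm q y ^ 2 ≤
      lqNorm q x ^ 2 + (∑ l, lqGrad q x l * (y l - x l)) +
        (q - 1) * lqNorm q (y - x) ^ 2 := by
  simpa using lqNorm_sq_add_le hq x (y - x)
end

section
/- Median-of-means in a metric space: let Y₁,…,Y_k be i.i.d. X-valued random variables and μ ∈ X a point such that P(d(Y_j, μ) ≥ 4R) ≤ 1/4 for each j. Let μ̂ be the center of a smallest closed ball containing strictly more than k/2 of the points Y₁,…,Y_k. Then P(d(μ̂, μ) > 8R) ≤ P(Bin(k, 1/4) ≥ k/2) ≤ e^{−k/8}. -/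
open MeasureTheory ProbabilityTheory Finset

/-!
If fewer than half of the points `Yⱼ` are far from `μ` (at distance `≥ 4R`), then more than half
lie in the closed ball of radius `4R` around `μ`. Hence the smallest ball containing a majority has
radius `≤ 4R`, and since two balls that each contain a majority of the points share one of them,
`d(μ̂, μ) ≤ 8R`. The number of far points is binomial with parameter `p ≤ 1/4`, its upper tail is
monotone in `p`, and for `j ≥ k/2` the estimate `p^j (1-p)^(k-j) ≤ √(p(1-p))^k` bounds the tail at
`p = 1/4` by `(2√(3/16))^k = (3/4)^(k/2) ≤ e^{-k/8}`.
-/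

/-- `binomialTail k m p = P(Bin(k, p) ≥ m)`. -/
noncomputable def binomialTail (k m : ℕ) (p : ℝ) : ℝ :=
  ∑ j ∈ range (k + 1), if m ≤ j then (k.choose j : ℝ) * p ^ j * (1 - p) ^ (k - j) else 0

section BinomialTail

variable {k m : ℕ} {p q : ℝ}

theorem binomialTail_zero_right (k : ℕ) (p : ℝ) : binomialTail k 0 p = 1 := by
  rw [← one_pow k, ← add_sub_cancel p 1, add_pow, binomialTail]
  refine sum_congr rfl fun j _ => ?_
  rw [if_pos j.zero_le]
  ring

theorem binomialTail_succ_right_le (hp₀ : 0 ≤ p) (hp₁ : p ≤ 1) :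
    binomialTail k (m + 1) p ≤ binomialTail k m p := by
  have : 0 ≤ 1 - p := sub_nonneg.2 hp₁
  refine sum_le_sum fun j _ => ?_
  split_ifs <;> first | omega | rfl | positivity

theorem choose_succ_mul_pow_mul_pow (k j : ℕ) (p : ℝ) :
    ((k + 1).choose (j + 1) : ℝ) * p ^ (j + 1) * (1 - p) ^ (k - j) =
      p * ((k.choose j : ℝ) * p ^ j * (1 - p) ^ (k - j)) +
        (1 - p) * ((k.choose (j + 1) : ℝ) * p ^ (j + 1) * (1 - p) ^ (k - (j + 1))) := by
  rcases lt_or_ge j k with hjk | hkj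
  · obtain ⟨d, rfl⟩ := Nat.exists_eq_add_of_lt hjk
    rw [Nat.choose_succ_succ', show j + d + 1 - j = d + 1 by omega,
      show j + d + 1 - (j + 1) = d by omega]
    push_cast
    ring
  · rw [Nat.choose_succ_succ', Nat.choose_eq_zero_of_lt (Nat.lt_succ_of_le hkj),
      Nat.sub_eq_zero_of_le hkj]
    push_cast
    ring

theorem binomialTail_succ_succ (k m : ℕ) (p : ℝ) :
    binomialTail (k + 1) (m + 1) p =
      p * binomialTail k m p + (1 - p) * binomialTail k (m + 1) p := by
  have hshift : binomialTail k (m + 1) p = ∑ j ∈ range (k + 1),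
      if m ≤ j then (k.choose (j + 1) : ℝ) * p ^ (j + 1) * (1 - p) ^ (k - (j + 1)) else 0 := by
    rw [binomialTail, sum_range_succ', sum_range_succ, Nat.choose_succ_self]
    simp
  rw [binomialTail, sum_range_succ', hshift, binomialTail, mul_sum, mul_sum, ← sum_add_distrib]
  simp only [Nat.add_sub_add_right, add_le_add_iff_right, nonpos_iff_eq_zero,
    Nat.add_one_ne_zero, if_false, add_zero]
  refine sum_congr rfl fun j _ => ?_
  split_ifs
  · exact choose_succ_mul_pow_mul_pow k j p
  · ring

theorem binomialTail_mono (hp : 0 ≤ p) (hpq : p ≤ q) (hq : q ≤ 1) :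
    binomialTail k m p ≤ binomialTail k m q := by
  induction k generalizing m with
  | zero => simp [binomialTail]
  | succ k ih =>
    cases m with
    | zero => rw [binomialTail_zero_right, binomialTail_zero_right]
    | succ m =>
      rw [binomialTail_succ_succ, binomialTail_succ_succ]
      -- both tails increase with `p`, and raising `p` moves weight to the larger one
      calc p * binomialTail k m p + (1 - p) * binomialTail k (m + 1) p
          ≤ p * binomialTail k m q + (1 - p) * binomialTail k (m + 1) q := by
            have : 0 ≤ 1 - p := by linarith
            gcongr <;> exact ih
        _ ≤ q * binomialTail k m q + (1 - q) * binomialTail k (m + 1) q := by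
            have := mul_nonneg (sub_nonneg.2 hpq)
              (sub_nonneg.2 (binomialTail_succ_right_le (k := k) (m := m) (hp.trans hpq) hq))
            linarith

theorem pow_mul_pow_sub_le_sqrt_mul_pow {j : ℕ} (hp : 0 ≤ p) (hpq : p ≤ q) (hj : j ≤ k)
    (hkj : k ≤ 2 * j) : p ^ j * q ^ (k - j) ≤ √(p * q) ^ k := by
  have hq : 0 ≤ q := hp.trans hpq
  have hps : p ≤ √(p * q) :=
    calc p = √(p * p) := (Real.sqrt_mul_self hp).symm
      _ ≤ √(p * q) := Real.sqrt_le_sqrt (mul_le_mul_of_nonneg_left hpq hp)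
  calc p ^ j * q ^ (k - j) = p ^ (2 * j - k) * (p * q) ^ (k - j) := by
        rw [mul_pow, ← mul_assoc, ← pow_add, show 2 * j - k + (k - j) = j by omega]
    _ ≤ √(p * q) ^ (2 * j - k) * √(p * q) ^ (2 * (k - j)) := by
        rw [pow_mul, Real.sq_sqrt (mul_nonneg hp hq)]
        have : 0 ≤ (p * q) ^ (k - j) := pow_nonneg (mul_nonneg hp hq) _
        gcongr
    _ = √(p * q) ^ k := by rw [← pow_add]; congr 1; omega

theorem binomialTail_le_pow (hkm : k ≤ 2 * m) (hp₀ : 0 ≤ p) (hp : p ≤ 1 / 2) :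
    binomialTail k m p ≤ (2 * √(p * (1 - p))) ^ k := by
  calc binomialTail k m p ≤ ∑ j ∈ range (k + 1), (k.choose j : ℝ) * √(p * (1 - p)) ^ k := by
        refine sum_le_sum fun j hj => ?_
        split_ifs with hmj
        · rw [mul_assoc]
          gcongr
          exact pow_mul_pow_sub_le_sqrt_mul_pow hp₀ (by linarith)
            (Nat.lt_succ_iff.1 (mem_range.1 hj)) (by omega)
        · positivity
    _ = (2 * √(p * (1 - p))) ^ k := by
        rw [← sum_mul, mul_pow, ← Nat.cast_sum, Nat.sum_range_choose]
        push_cast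
        rfl

theorem binomialTail_quarter_le_exp (hkm : k ≤ 2 * m) :
    binomialTail k m (1 / 4) ≤ Real.exp (-k / 8) := by
  have hbase : 2 * √(1 / 4 * (1 - 1 / 4)) ≤ Real.exp (-1 / 8) := by
    rw [← pow_le_pow_iff_left₀ (by positivity) (by positivity) two_ne_zero, mul_pow,
      Real.sq_sqrt (by norm_num), ← Real.exp_nat_mul]
    have := Real.add_one_le_exp (-1 / 4)
    norm_num at this ⊢
    linarith
  calc binomialTail k m (1 / 4) ≤ (2 * √(1 / 4 * (1 - 1 / 4))) ^ k :=
        binomialTail_le_pow hkm (by norm_num) (by norm_num)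
    _ ≤ Real.exp (-1 / 8) ^ k := by gcongr
    _ = Real.exp (-k / 8) := by rw [← Real.exp_nat_mul]; ring_nf

theorem binomialTail_eq_sum_finset {ι : Type*} [Fintype ι] (m : ℕ) (p : ℝ) :
    binomialTail (Fintype.card ι) m p =
      ∑ A : Finset ι with m ≤ #A, p ^ #A * (1 - p) ^ (Fintype.card ι - #A) := by
  rw [sum_filter, ← powerset_univ, sum_powerset_apply_card
    (fun j => if m ≤ j then p ^ j * (1 - p) ^ (Fintype.card ι - j) else 0), card_univ, binomialTail]
  refine sum_congr rfl fun j _ => ?_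
  rw [nsmul_eq_mul, mul_ite, mul_zero, mul_assoc]

end BinomialTail

theorem measureReal_le_card_mem_eq_binomialTail {Ω ι β : Type*} [MeasurableSpace Ω]
    [MeasurableSpace β] [Fintype ι] {P : Measure Ω} [IsProbabilityMeasure P]
    {Z : ι → Ω → β} (hZ : ∀ i, Measurable (Z i)) (hind : iIndepFun Z P)
    {S : Set β} [DecidablePred (· ∈ S)] (hS : MeasurableSet S) {p : ℝ}
    (hp : ∀ i, P.real (Z i ⁻¹' S) = p) (m : ℕ) :
    P.real {ω | m ≤ #{i | Z i ω ∈ S}} = binomialTail (Fintype.card ι) m p := by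
  classical
  set N : Ω → Finset ι := fun ω => {i | Z i ω ∈ S}
  have hfiber (A : Finset ι) : N ⁻¹' {A} = ⋂ i, Z i ⁻¹' (if i ∈ A then S else Sᶜ) := by
    ext ω
    simp only [N, Set.mem_preimage, Set.mem_singleton_iff, Finset.ext_iff, mem_filter,
      mem_univ, true_and, Set.mem_iInter]
    refine forall_congr' fun i => ?_
    split_ifs with hi <;> simp [hi]
  have hT (A : Finset ι) (i : ι) : MeasurableSet (if i ∈ A then S else Sᶜ) := by
    split_ifs
    exacts [hS, hS.compl]
  have hatom (A : Finset ι) :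
      P.real (N ⁻¹' {A}) = p ^ #A * (1 - p) ^ (Fintype.card ι - #A) := by
    rw [hfiber, measureReal_def, hind.meas_iInter fun i => ⟨_, hT A i, rfl⟩, ENNReal.toReal_prod]
    have hfactor (i : ι) :
        P.real (Z i ⁻¹' (if i ∈ A then S else Sᶜ)) = if i ∈ A then p else 1 - p := by
      split_ifs
      · exact hp i
      · rw [Set.preimage_compl, probReal_compl_eq_one_sub (hZ i hS), hp]
    simp_rw [← measureReal_def, hfactor, prod_ite, prod_const, ← sdiff_eq_filter,
      ← compl_eq_univ_sdiff, card_compl]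
    simp only [subset_univ, filter_mem_eq_of_subset]
  calc P.real {ω | m ≤ #{i | Z i ω ∈ S}}
        = P.real (N ⁻¹' ↑({A | m ≤ #A} : Finset (Finset ι))) := by
        congr 1
        ext ω
        simp [N]
    _ = ∑ A : Finset ι with m ≤ #A, P.real (N ⁻¹' {A}) :=
        (sum_measureReal_preimage_singleton _ fun A _ =>
          hfiber A ▸ MeasurableSet.iInter fun i => hZ i (hT A i)).symm
    _ = binomialTail (Fintype.card ι) m p := by
        simp_rw [hatom]
        exact (binomialTail_eq_sum_finset m p).symm

theorem dist_le_add_of_half_lt_card {X ι : Type*} [PseudoMetricSpace X] [Fintype ι]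
    (y : ι → X) {a b : X} {r s : ℝ}
    (ha : (Fintype.card ι : ℝ) / 2 < #{i | dist (y i) a ≤ r})
    (hb : (Fintype.card ι : ℝ) / 2 < #{i | dist (y i) b ≤ s}) :
    dist a b ≤ r + s := by
  classical
  have hcard : #(univ : Finset ι) < #{i | dist (y i) a ≤ r} + #{i | dist (y i) b ≤ s} := by
    rw [card_univ]
    have : (Fintype.card ι : ℝ) < #{i | dist (y i) a ≤ r} + #{i | dist (y i) b ≤ s} := by
      linarith
    exact_mod_cast this
  obtain ⟨i, hi⟩ := inter_nonempty_of_card_lt_card_add_card (subset_univ _) (subset_univ _) hcard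
  simp only [mem_inter, mem_filter, mem_univ, true_and] at hi
  calc dist a b ≤ dist (y i) a + dist (y i) b := dist_triangle_left _ _ _
    _ ≤ r + s := add_le_add hi.1 hi.2

theorem dist_le_two_mul_of_card_far_lt_half {X ι : Type*} [PseudoMetricSpace X] [Fintype ι]
    (y : ι → X) {c μ : X} {ρ r : ℝ}
    (hcover : (Fintype.card ι : ℝ) / 2 < #{i | dist (y i) c ≤ ρ})
    (hmin : ∀ c' r', (Fintype.card ι : ℝ) / 2 < #{i | dist (y i) c' ≤ r'} → ρ ≤ r')
    (hfar : (#{i | r ≤ dist (y i) μ} : ℝ) < Fintype.card ι / 2) :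
    dist c μ ≤ 2 * r := by
  have hnear : (Fintype.card ι : ℝ) / 2 < #{i | dist (y i) μ ≤ r} := by
    have hsplit := card_filter_add_card_filter_not (s := univ) fun i => r ≤ dist (y i) μ
    have hsub : #{i | ¬r ≤ dist (y i) μ} ≤ #{i | dist (y i) μ ≤ r} :=
      card_le_card <| monotone_filter_right _ fun _ _ hi => (not_le.1 hi).le
    rw [card_univ] at hsplit
    have : (Fintype.card ι : ℝ) = #{i | r ≤ dist (y i) μ} + #{i | ¬r ≤ dist (y i) μ} := by
      exact_mod_cast hsplit.symm
    have : (#{i | ¬r ≤ dist (y i) μ} : ℝ) ≤ #{i | dist (y i) μ ≤ r} := by exact_mod_cast hsub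
    linarith
  linarith [dist_le_add_of_half_lt_card y hcover hnear, hmin μ r hnear]

theorem stmt_13_general {X : Type*} [MetricSpace X] [MeasurableSpace X] [BorelSpace X]
    {Ω : Type*} [MeasurableSpace Ω] (P : Measure Ω) [IsProbabilityMeasure P]
    (k : ℕ) (hk : 0 < k) (Y : Fin k → Ω → X)
    (hmeas : ∀ j, Measurable (Y j))
    (hindep : iIndepFun Y P)
    (hident : ∀ j, IdentDistrib (Y j) (Y ⟨0, hk⟩) P P)
    (μ : X) (R : ℝ)
    (htail : ∀ j, P {ω | dist (Y j ω) μ ≥ 4 * R} ≤ 1 / 4)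
    (μhat : Ω → X) (ρhat : Ω → ℝ)
    -- `μ̂ ω` is the center of a closed ball of radius `ρ̂ ω` containing
    -- strictly more than `k/2` of the points:
    (hcover : ∀ ω,
      (k : ℝ) / 2 < ((univ.filter fun j : Fin k => dist (Y j ω) (μhat ω) ≤ ρhat ω).card : ℝ))
    -- and this ball is a smallest such ball:
    (hmin : ∀ (ω : Ω) (c : X) (r : ℝ),
      (k : ℝ) / 2 < ((univ.filter fun j : Fin k => dist (Y j ω) c ≤ r).card : ℝ) →
        ρhat ω ≤ r) :
    P {ω | dist (μhat ω) μ > 8 * R} ≤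
        ENNReal.ofReal (∑ j ∈ Finset.range (k + 1),
          if (k : ℝ) / 2 ≤ (j : ℝ) then
            (k.choose j : ℝ) * (1 / 4) ^ j * (3 / 4) ^ (k - j)
          else 0) ∧
      (∑ j ∈ Finset.range (k + 1),
          if (k : ℝ) / 2 ≤ (j : ℝ) then
            (k.choose j : ℝ) * (1 / 4) ^ j * (3 / 4) ^ (k - j)
          else 0) ≤ Real.exp (-(k : ℝ) / 8) := by
  classical
  set S : Set X := {x | 4 * R ≤ dist x μ}
  have hS : MeasurableSet S :=
    (isClosed_le continuous_const (continuous_id.dist continuous_const)).measurableSet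
  set p := P.real (Y ⟨0, hk⟩ ⁻¹' S)
  have hp (j : Fin k) : P.real (Y j ⁻¹' S) = p :=
    congrArg ENNReal.toReal ((hident j).measure_mem_eq hS)
  have hp₄ : p ≤ 1 / 4 := by
    simpa [p, S, measureReal_def] using ENNReal.toReal_mono (by norm_num) (htail ⟨0, hk⟩)
  set m := ⌈(k : ℝ) / 2⌉₊
  have hkm : k ≤ 2 * m := by
    have : (k : ℝ) ≤ 2 * m := by linarith [Nat.le_ceil ((k : ℝ) / 2)]
    exact_mod_cast this
  have hbad : {ω | dist (μhat ω) μ > 8 * R} ⊆ {ω | m ≤ #{j | Y j ω ∈ S}} := by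
    intro ω (hω : dist (μhat ω) μ > 8 * R)
    by_contra hfew
    have := dist_le_two_mul_of_card_far_lt_half (fun j => Y j ω) (by simpa using hcover ω)
      (fun c r h => hmin ω c r (by simpa using h)) (by simpa [m, S, Nat.ceil_le] using hfew)
    linarith
  have htarget : (∑ j ∈ Finset.range (k + 1), if (k : ℝ) / 2 ≤ (j : ℝ) then
      (k.choose j : ℝ) * (1 / 4) ^ j * (3 / 4) ^ (k - j) else 0) = binomialTail k m (1 / 4) := by
    simp_rw [binomialTail, m, Nat.ceil_le]
    norm_num
  rw [htarget]
  refine ⟨?_, binomialTail_quarter_le_exp hkm⟩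
  calc P {ω | dist (μhat ω) μ > 8 * R} ≤ P {ω | m ≤ #{j | Y j ω ∈ S}} := measure_mono hbad
    _ = ENNReal.ofReal (binomialTail k m p) := by
        rw [← ofReal_measureReal, measureReal_le_card_mem_eq_binomialTail hmeas hindep hS hp,
          Fintype.card_fin]
    _ ≤ ENNReal.ofReal (binomialTail k m (1 / 4)) :=
        ENNReal.ofReal_le_ofReal (binomialTail_mono measureReal_nonneg hp₄ (by norm_num))

/-- Median-of-means in a metric space: if each `Yⱼ` lands within distance `4R`
of `μ` with probability at least `3/4` and `μ̂` is the center of a smallest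
closed ball containing strictly more than `k/2` of the points `Y₁,…,Y_k`, then
`P(d(μ̂, μ) > 8R) ≤ P(Bin(k, 1/4) ≥ k/2) ≤ e^{−k/8}`. -/
theorem stmt_13 {X : Type*} [MetricSpace X] [TopologicalSpace.SeparableSpace X]
    [MeasurableSpace X] [BorelSpace X]
    {Ω : Type*} [MeasurableSpace Ω] (P : Measure Ω) [IsProbabilityMeasure P]
    (k : ℕ) (hk : 0 < k) (Y : Fin k → Ω → X)
    (hmeas : ∀ j, Measurable (Y j))
    (hindep : iIndepFun Y P)
    (hident : ∀ j, IdentDistrib (Y j) (Y ⟨0, hk⟩) P P)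
    (μ : X) (R : ℝ) (hR : 0 < R)
    (htail : ∀ j, P {ω | dist (Y j ω) μ ≥ 4 * R} ≤ 1 / 4)
    (μhat : Ω → X) (ρhat : Ω → ℝ)
    -- `μ̂ ω` is the center of a closed ball of radius `ρ̂ ω` containing
    -- strictly more than `k/2` of the points:
    (hcover : ∀ ω,
      (k : ℝ) / 2 < ((univ.filter fun j : Fin k => dist (Y j ω) (μhat ω) ≤ ρhat ω).card : ℝ))
    -- and this ball is a smallest such ball:
    (hmin : ∀ (ω : Ω) (c : X) (r : ℝ),
      (k : ℝ) / 2 < ((univ.filter fun j : Fin k => dist (Y j ω) c ≤ r).card : ℝ) →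
        ρhat ω ≤ r) :
    P {ω | dist (μhat ω) μ > 8 * R} ≤
        ENNReal.ofReal (∑ j ∈ Finset.range (k + 1),
          if (k : ℝ) / 2 ≤ (j : ℝ) then
            (k.choose j : ℝ) * (1 / 4) ^ j * (3 / 4) ^ (k - j)
          else 0) ∧
      (∑ j ∈ Finset.range (k + 1),
          if (k : ℝ) / 2 ≤ (j : ℝ) then
            (k.choose j : ℝ) * (1 / 4) ^ j * (3 / 4) ^ (k - j)
          else 0) ≤ Real.exp (-(k : ℝ) / 8) :=
  stmt_13_general P k hk Y hmeas hindep hident μ R htail μhat ρhat hcover hmin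
end

section
/- Uniqueness of the Fréchet mean in a uniformly convex Banach space: let (X, ‖·‖) be a Banach space whose squared norm satisfies ‖y‖² ≥ ‖x‖² + ⟨x*, y−x⟩ + (C/2)‖x−y‖² for all x,y and subgradients x* ∈ ∂(‖·‖²)(x), with C > 0. Let X be an X-valued random variable with E‖X‖² < ∞ and let μ satisfy the first-order condition E⟨g(X−μ), y⟩ = 0 for all y ∈ X, where g(x) ∈ ∂(‖·‖²)(x) is a measurable subgradient selection. Then E‖X−b‖² − E‖X−μ‖² ≥ (C/2)‖b−μ‖² for all b ∈ X; hence μ is the unique Fréchet mean. -/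
/-!
Uniform convexity of `‖·‖²` at `X ω - μ`, tested against `X ω - b`, bounds
`‖X ω - b‖² - ‖X ω - μ‖²` below by `g (X ω - μ) (μ - b) + (C/2)‖b - μ‖²`. Taking
expectations, the linear term vanishes by the first-order condition, leaving
`E‖X - b‖² - E‖X - μ‖² ≥ (C/2)‖b - μ‖²`, which is positive for `b ≠ μ`.
-/

open MeasureTheory

/-- `xs ∈ ∂f(x)` for a function `f` on a normed space `X`. -/
def IsSubgradientAt {X : Type*} [NormedAddCommGroup X] [NormedSpace ℝ X]
    (f : X → ℝ) (x : X) (xs : X →L[ℝ] ℝ) : Prop :=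
  ∀ y : X, f y ≥ f x + xs (y - x)

section

variable {X : Type*} [NormedAddCommGroup X] [NormedSpace ℝ X] {C : ℝ}

theorem sq_norm_sub_sub_sq_norm_sub_ge
    (hconv : ∀ (x y : X) (xs : X →L[ℝ] ℝ),
      IsSubgradientAt (fun z => ‖z‖ ^ 2) x xs →
        ‖y‖ ^ 2 ≥ ‖x‖ ^ 2 + xs (y - x) + C / 2 * ‖x - y‖ ^ 2)
    {x μ : X} {xs : X →L[ℝ] ℝ} (hxs : IsSubgradientAt (fun z => ‖z‖ ^ 2) (x - μ) xs)
    (b : X) :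
    ‖x - b‖ ^ 2 - ‖x - μ‖ ^ 2 ≥ xs (μ - b) + C / 2 * ‖b - μ‖ ^ 2 := by
  have h := hconv (x - μ) (x - b) xs hxs
  rw [sub_sub_sub_cancel_left, sub_sub_sub_cancel_left] at h
  linarith

variable {Ω : Type*} [MeasurableSpace Ω] {P : Measure Ω} [IsProbabilityMeasure P]

theorem integral_sq_norm_sub_sub_ge
    (hconv : ∀ (x y : X) (xs : X →L[ℝ] ℝ),
      IsSubgradientAt (fun z => ‖z‖ ^ 2) x xs →
        ‖y‖ ^ 2 ≥ ‖x‖ ^ 2 + xs (y - x) + C / 2 * ‖x - y‖ ^ 2)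
    {g : X → X →L[ℝ] ℝ} (hg : ∀ x : X, IsSubgradientAt (fun z => ‖z‖ ^ 2) x (g x))
    {Xr : Ω → X} {μ b : X}
    (hint_b : Integrable (fun ω => ‖Xr ω - b‖ ^ 2) P)
    (hint_μ : Integrable (fun ω => ‖Xr ω - μ‖ ^ 2) P)
    (hint_g : Integrable (fun ω => g (Xr ω - μ) (μ - b)) P)
    (hfirst : ∫ ω, g (Xr ω - μ) (μ - b) ∂P = 0) :
    (∫ ω, ‖Xr ω - b‖ ^ 2 ∂P) - (∫ ω, ‖Xr ω - μ‖ ^ 2 ∂P) ≥ C / 2 * ‖b - μ‖ ^ 2 := by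
  calc (∫ ω, ‖Xr ω - b‖ ^ 2 ∂P) - (∫ ω, ‖Xr ω - μ‖ ^ 2 ∂P)
      = ∫ ω, (‖Xr ω - b‖ ^ 2 - ‖Xr ω - μ‖ ^ 2) ∂P := (integral_sub hint_b hint_μ).symm
    _ ≥ ∫ ω, (g (Xr ω - μ) (μ - b) + C / 2 * ‖b - μ‖ ^ 2) ∂P :=
      integral_mono (hint_g.add (integrable_const _)) (hint_b.sub hint_μ)
        fun ω => sq_norm_sub_sub_sq_norm_sub_ge hconv (hg _) b
    _ = C / 2 * ‖b - μ‖ ^ 2 := by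
      rw [integral_add hint_g (integrable_const _), hfirst, integral_const, probReal_univ,
        one_smul, zero_add]

end

theorem stmt_16_general {X : Type*} [NormedAddCommGroup X] [NormedSpace ℝ X]
    {Ω : Type*} [MeasurableSpace Ω] (P : Measure Ω) [IsProbabilityMeasure P]
    (C : ℝ) (hC : 0 < C)
    (hconv : ∀ (x y : X) (xs : X →L[ℝ] ℝ),
      IsSubgradientAt (fun z => ‖z‖ ^ 2) x xs →
        ‖y‖ ^ 2 ≥ ‖x‖ ^ 2 + xs (y - x) + C / 2 * ‖x - y‖ ^ 2)
    (g : X → X →L[ℝ] ℝ)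
    (hg : ∀ x : X, IsSubgradientAt (fun z => ‖z‖ ^ 2) x (g x))
    (Xr : Ω → X) (μ : X)
    (hint : ∀ b : X, Integrable (fun ω => ‖Xr ω - b‖ ^ 2) P)
    (hint' : ∀ y : X, Integrable (fun ω => g (Xr ω - μ) y) P)
    (hfirst : ∀ y : X, ∫ ω, g (Xr ω - μ) y ∂P = 0) :
    (∀ b : X,
      (∫ ω, ‖Xr ω - b‖ ^ 2 ∂P) - (∫ ω, ‖Xr ω - μ‖ ^ 2 ∂P) ≥ C / 2 * ‖b - μ‖ ^ 2) ∧
    (∀ b : X, b ≠ μ →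
      (∫ ω, ‖Xr ω - μ‖ ^ 2 ∂P) < ∫ ω, ‖Xr ω - b‖ ^ 2 ∂P) := by
  have key : ∀ b : X,
      (∫ ω, ‖Xr ω - b‖ ^ 2 ∂P) - (∫ ω, ‖Xr ω - μ‖ ^ 2 ∂P) ≥ C / 2 * ‖b - μ‖ ^ 2 :=
    fun b => integral_sq_norm_sub_sub_ge hconv hg (hint b) (hint μ) (hint' (μ - b))
      (hfirst (μ - b))
  refine ⟨key, fun b hb => ?_⟩
  have hgap : 0 < C / 2 * ‖b - μ‖ ^ 2 := by
    have := norm_pos_iff.mpr (sub_ne_zero.mpr hb)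
    positivity
  linarith [key b]

/-- Uniqueness of the Fréchet mean in a uniformly convex Banach space of power
type 2: if `μ` satisfies the first-order condition `E⟨g(X−μ), y⟩ = 0` for all
`y`, then `E‖X−b‖² − E‖X−μ‖² ≥ (C/2)‖b−μ‖²` for all `b`; hence `μ` is the
unique Fréchet mean. -/
theorem stmt_16 {X : Type*} [NormedAddCommGroup X] [NormedSpace ℝ X]
    [CompleteSpace X] [SecondCountableTopology X]
    {Ω : Type*} [MeasurableSpace Ω] (P : Measure Ω) [IsProbabilityMeasure P]
    (C : ℝ) (hC : 0 < C)
    (hconv : ∀ (x y : X) (xs : X →L[ℝ] ℝ),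
      IsSubgradientAt (fun z => ‖z‖ ^ 2) x xs →
        ‖y‖ ^ 2 ≥ ‖x‖ ^ 2 + xs (y - x) + C / 2 * ‖x - y‖ ^ 2)
    (g : X → X →L[ℝ] ℝ)
    (hg : ∀ x : X, IsSubgradientAt (fun z => ‖z‖ ^ 2) x (g x))
    (Xr : Ω → X) (μ : X)
    (hint : ∀ b : X, Integrable (fun ω => ‖Xr ω - b‖ ^ 2) P)
    (hint' : ∀ y : X, Integrable (fun ω => g (Xr ω - μ) y) P)
    (hfirst : ∀ y : X, ∫ ω, g (Xr ω - μ) y ∂P = 0) :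
    (∀ b : X,
      (∫ ω, ‖Xr ω - b‖ ^ 2 ∂P) - (∫ ω, ‖Xr ω - μ‖ ^ 2 ∂P) ≥ C / 2 * ‖b - μ‖ ^ 2) ∧
    (∀ b : X, b ≠ μ →
      (∫ ω, ‖Xr ω - μ‖ ^ 2 ∂P) < ∫ ω, ‖Xr ω - b‖ ^ 2 ∂P) :=
  stmt_16_general P C hC hconv g hg Xr μ hint hint' hfirst
end

section
/- If a closed ball B[x₀,R] in a metric space satisfies R large enough, then the Fréchet functional is bounded below outside the ball: for any random variable X with E d²(X,x₀) < ∞ and any x with d(x,x₀) > R, E d²(X,x) ≥ R²·P(d(X,x₀) < R) − 2R·E[d(X,x₀)·1{d(X,x₀) < R}]. Consequently, inf_{x∈X\B[x₀,R]} E d²(X,x) → ∞ as R → ∞, so for R large enough the infimum of E d²(X,·) over X equals its infimum over B[x₀,R]. -/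
/-!
On the event `d(X,x₀) < R` the triangle inequality gives `d(X,x) ≥ R − d(X,x₀) > 0`, whence
`d²(X,x) ≥ R² − 2R·d(X,x₀)`; integrating over that event gives the lower bound. For the growth,
`d(x,x₀)² ≤ 2d²(X,x) + 2d²(X,x₀)` yields `E d²(X,x) ≥ d(x,x₀)²/2 − E d²(X,x₀)`, which exceeds any
`M` once `x` is far enough from `x₀`; taking `M = E d²(X,x₀)`, points outside a large ball cannot
lower the infimum.
-/

open MeasureTheory Metric

theorem ciInf_eq_ciInf_subtype_of_le {α β : Type*} [ConditionallyCompleteLattice β] {f : α → β}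
    {s : Set α} (hf : BddBelow (Set.range f)) {a : α} (ha : a ∈ s) (h : ∀ x ∉ s, f a ≤ f x) :
    ⨅ x, f x = ⨅ x : s, f x := by
  have : Nonempty α := ⟨a⟩
  have : Nonempty s := ⟨⟨a, ha⟩⟩
  have hs : BddBelow (Set.range fun x : s => f x) := hf.mono (Set.range_comp_subset_range _ f)
  refine le_antisymm (le_ciInf fun x => ciInf_le hf x) (le_ciInf fun x => ?_)
  by_cases hx : x ∈ s
  · exact ciInf_le hs ⟨x, hx⟩
  · exact (ciInf_le hs ⟨a, ha⟩).trans (h x hx)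

section PseudoMetricSpace

variable {X : Type*} [PseudoMetricSpace X]

theorem sq_sub_two_mul_dist_le_sq_dist {x y z : X} {R : ℝ} (hR : R ≤ dist x z)
    (hy : dist y z < R) : R ^ 2 - 2 * R * dist y z ≤ dist y x ^ 2 := by
  have hyx : R - dist y z ≤ dist y x := by
    linarith [dist_triangle x y z, dist_comm x y]
  nlinarith [sq_nonneg (dist y z)]

theorem sq_dist_div_two_sub_sq_dist_le (x y z : X) :
    dist x z ^ 2 / 2 - dist y z ^ 2 ≤ dist y x ^ 2 := by
  have hxz : dist x z ≤ dist y x + dist y z := by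
    linarith [dist_triangle x y z, dist_comm x y]
  nlinarith [sq_nonneg (dist y x - dist y z), dist_nonneg (x := x) (y := z)]

variable {Ω : Type*} [MeasurableSpace Ω] {μ : Measure Ω} {Y : Ω → X} {x x₀ : X}

theorem memLp_two_dist_of_memLp_two_dist [IsFiniteMeasure μ]
    (hx : AEStronglyMeasurable (fun ω => dist (Y ω) x) μ)
    (h₀ : MemLp (fun ω => dist (Y ω) x₀) 2 μ) : MemLp (fun ω => dist (Y ω) x) 2 μ :=
  (h₀.add (memLp_const (dist x₀ x))).mono hx <| ae_of_all _ fun ω => by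
    simp only [Real.norm_eq_abs, Pi.add_apply, abs_dist]
    exact (dist_triangle _ _ _).trans (le_abs_self _)

theorem sq_mul_measure_sub_le_integral_sq_dist [IsFiniteMeasure μ] {R : ℝ} (hR : R ≤ dist x x₀)
    (h₀meas : Measurable fun ω => dist (Y ω) x₀) (h₀ : Integrable (fun ω => dist (Y ω) x₀) μ)
    (hx : Integrable (fun ω => dist (Y ω) x ^ 2) μ) :
    R ^ 2 * (μ {ω | dist (Y ω) x₀ < R}).toReal -
        2 * R * ∫ ω in {ω | dist (Y ω) x₀ < R}, dist (Y ω) x₀ ∂μ ≤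
      ∫ ω, dist (Y ω) x ^ 2 ∂μ := by
  set A := {ω | dist (Y ω) x₀ < R}
  have hA : MeasurableSet A := h₀meas measurableSet_Iio
  calc R ^ 2 * (μ A).toReal - 2 * R * ∫ ω in A, dist (Y ω) x₀ ∂μ
      = ∫ ω in A, (R ^ 2 - 2 * R * dist (Y ω) x₀) ∂μ := by
        rw [integral_sub (integrable_const _).integrableOn (h₀.const_mul _).integrableOn,
          setIntegral_const, integral_const_mul, smul_eq_mul, measureReal_def, mul_comm]
    _ ≤ ∫ ω in A, dist (Y ω) x ^ 2 ∂μ :=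
        setIntegral_mono_on ((integrable_const _).sub (h₀.const_mul _)).integrableOn
          hx.integrableOn hA fun ω hω => sq_sub_two_mul_dist_le_sq_dist hR hω
    _ ≤ ∫ ω, dist (Y ω) x ^ 2 ∂μ := setIntegral_le_integral hx (ae_of_all _ fun ω => sq_nonneg _)

theorem sq_dist_div_two_sub_le_integral_sq_dist [IsProbabilityMeasure μ]
    (h₀ : Integrable (fun ω => dist (Y ω) x₀ ^ 2) μ)
    (hx : Integrable (fun ω => dist (Y ω) x ^ 2) μ) :
    dist x x₀ ^ 2 / 2 - ∫ ω, dist (Y ω) x₀ ^ 2 ∂μ ≤ ∫ ω, dist (Y ω) x ^ 2 ∂μ := by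
  calc dist x x₀ ^ 2 / 2 - ∫ ω, dist (Y ω) x₀ ^ 2 ∂μ
      = ∫ ω, (dist x x₀ ^ 2 / 2 - dist (Y ω) x₀ ^ 2) ∂μ := by
        rw [integral_sub (integrable_const _) h₀, integral_const, probReal_univ, one_smul]
    _ ≤ ∫ ω, dist (Y ω) x ^ 2 ∂μ :=
        integral_mono ((integrable_const _).sub h₀) hx fun ω => sq_dist_div_two_sub_sq_dist_le _ _ _

theorem exists_forall_le_integral_sq_dist [IsProbabilityMeasure μ]
    (hint : ∀ x, Integrable (fun ω => dist (Y ω) x ^ 2) μ) (M : ℝ) :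
    ∃ R₀ : ℝ, 0 < R₀ ∧ ∀ R ≥ R₀, ∀ x : X, dist x x₀ > R → M ≤ ∫ ω, dist (Y ω) x ^ 2 ∂μ := by
  set V := ∫ ω, dist (Y ω) x₀ ^ 2 ∂μ
  refine ⟨max 2 (M + V), by positivity, fun R hR x hx => ?_⟩
  have hR2 : 2 ≤ R := le_of_max_le_left hR
  have hRM : M + V ≤ R := le_of_max_le_right hR
  have hbound := sq_dist_div_two_sub_le_integral_sq_dist (hint x₀) (hint x)
  nlinarith

end PseudoMetricSpace

/-- Outside a large ball, the Fréchet functional is bounded below: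
for `d(x,x₀) > R`,
`E d²(X,x) ≥ R²·P(d(X,x₀) < R) − 2R·E[d(X,x₀)·1{d(X,x₀) < R}]`.
Consequently the infimum outside `B[x₀,R]` tends to infinity as `R → ∞`, so
for `R` large enough the infimum of `E d²(X,·)` over `X` equals its infimum
over `B[x₀,R]`. -/
theorem stmt_17 {X : Type*} [MetricSpace X]
    {Ω : Type*} [MeasurableSpace Ω] (P : Measure Ω) [IsProbabilityMeasure P]
    (Xr : Ω → X) (x₀ : X)
    (hmeas : ∀ x : X, Measurable (fun ω => dist (Xr ω) x))
    (hint : Integrable (fun ω => dist (Xr ω) x₀ ^ 2) P) :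
    (∀ R : ℝ, 0 < R → ∀ x : X, dist x x₀ > R →
      (∫ ω, dist (Xr ω) x ^ 2 ∂P) ≥
        R ^ 2 * (P {ω | dist (Xr ω) x₀ < R}).toReal -
          2 * R * ∫ ω in {ω | dist (Xr ω) x₀ < R}, dist (Xr ω) x₀ ∂P) ∧
    (∀ M : ℝ, ∃ R₀ : ℝ, ∀ R ≥ R₀, ∀ x : X, dist x x₀ > R →
      M ≤ ∫ ω, dist (Xr ω) x ^ 2 ∂P) ∧
    (∃ R₀ : ℝ, 0 < R₀ ∧ ∀ R ≥ R₀,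
      (⨅ x : X, ∫ ω, dist (Xr ω) x ^ 2 ∂P) =
        ⨅ x : closedBall x₀ R, ∫ ω, dist (Xr ω) (x : X) ^ 2 ∂P) := by
  have hL2 : ∀ x, MemLp (fun ω => dist (Xr ω) x) 2 P := fun x =>
    memLp_two_dist_of_memLp_two_dist (hmeas x).aestronglyMeasurable
      ((memLp_two_iff_integrable_sq (hmeas x₀).aestronglyMeasurable).2 hint)
  have hsq : ∀ x, Integrable (fun ω => dist (Xr ω) x ^ 2) P := fun x => (hL2 x).integrable_sq
  refine ⟨fun R _ x hx => sq_mul_measure_sub_le_integral_sq_dist hx.le (hmeas x₀)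
    ((hL2 x₀).integrable one_le_two) (hsq x), fun M => ?_, ?_⟩
  · obtain ⟨R₀, -, hR₀⟩ := exists_forall_le_integral_sq_dist (x₀ := x₀) hsq M
    exact ⟨R₀, hR₀⟩
  · obtain ⟨R₀, hR₀pos, hR₀⟩ :=
      exists_forall_le_integral_sq_dist (x₀ := x₀) hsq (∫ ω, dist (Xr ω) x₀ ^ 2 ∂P)
    refine ⟨R₀, hR₀pos, fun R hR => ciInf_eq_ciInf_subtype_of_le
      ⟨0, Set.forall_mem_range.2 fun x => integral_nonneg fun ω => sq_nonneg _⟩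
      (mem_closedBall_self (hR₀pos.le.trans hR)) fun x hx => hR₀ R hR x ?_⟩
    simpa using hx
end
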